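/- Fix an integer N ≥ 1, weights α_1,…,α_N > 0 with Σ_{k=1}^N α_k = 1, θ ∈ (0,1), and ν > 0. Suppose each F_k : ℝ^d → ℝ is B-Lipschitz. Then for every w ∈ ℝ^d the infimum F_{θ,ν}(w) := inf_{η ∈ ℝ} F̄_{θ,ν}(w, η) is finite and attained, and the function F_{θ,ν} : ℝ^d → ℝ is (B/θ)-Lipschitz with respect to the Euclidean norm. -/

import Mathlib

open Finset

/-- The smoothing `g_ν` of the positive-part function. -/
noncomputable def gsm (ν ρ : ℝ) : ℝ :=
  if ρ ≤ 0 then ν / 2 else if ρ ≤ ν then ρ ^ 2 / (2 * ν) + ν / 2 else ρ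


set_option maxHeartbeats 1000000 in
lemma gsm_helper {ν : ℝ} (hν : 0 < ν) {a b : ℝ} (hab : a ≤ b) :
    gsm ν a ≤ gsm ν b ∧ gsm ν b - gsm ν a ≤ b - a := by
  have h2ν : (0:ℝ) < 2 * ν := by linarith
  have ea : 2 * ν * (a ^ 2 / (2 * ν)) = a ^ 2 := mul_div_cancel₀ _ (ne_of_gt h2ν)
  have eb : 2 * ν * (b ^ 2 / (2 * ν)) = b ^ 2 := mul_div_cancel₀ _ (ne_of_gt h2ν)
  have ha' : 0 ≤ a ^ 2 / (2 * ν) := by positivity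
  have hb' : 0 ≤ b ^ 2 / (2 * ν) := by positivity
  unfold gsm
  constructor <;> split_ifs <;>
    nlinarith [ea, eb, ha', hb', h2ν, sq_nonneg (a - b), sq_nonneg (a - ν), sq_nonneg (b - ν)]

lemma gsm_abs_sub {ν : ℝ} (hν : 0 < ν) (a b : ℝ) :
    |gsm ν a - gsm ν b| ≤ |a - b| := by
  rcases le_total a b with h | h
  · obtain ⟨h1, h2⟩ := gsm_helper hν h
    rw [abs_of_nonpos (by linarith), abs_of_nonpos (by linarith)]; linarith
  · obtain ⟨h1, h2⟩ := gsm_helper hν h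
    rw [abs_of_nonneg (by linarith), abs_of_nonneg (by linarith)]; linarith

lemma gsm_cont {ν : ℝ} (hν : 0 < ν) : Continuous (gsm ν) := by
  have : LipschitzWith 1 (gsm ν) :=
    LipschitzWith.of_dist_le_mul fun a b => by
      simpa [Real.dist_eq] using gsm_abs_sub hν a b
  exact this.continuous

lemma gsm_ge_self {ν : ℝ} (hν : 0 < ν) (ρ : ℝ) : ρ ≤ gsm ν ρ := by
  have h2ν : (0:ℝ) < 2 * ν := by linarith
  have e : 2 * ν * (ρ ^ 2 / (2 * ν)) = ρ ^ 2 := mul_div_cancel₀ _ (ne_of_gt h2ν)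
  unfold gsm; split_ifs <;> nlinarith [e, sq_nonneg (ρ - ν)]

lemma gsm_nonneg {ν : ℝ} (hν : 0 < ν) (ρ : ℝ) : 0 ≤ gsm ν ρ := by
  unfold gsm; split_ifs <;> (try positivity) <;> nlinarith [sq_nonneg ρ]

theorem smoothed_partial_min_attained_and_lipschitz
    (N d : ℕ) (hN : 1 ≤ N) (α : Fin N → ℝ) (hα : ∀ k, 0 < α k)
    (hαsum : ∑ k, α k = 1) (θ ν : ℝ) (hθ0 : 0 < θ) (hθ1 : θ < 1) (hν : 0 < ν)
    (B : ℝ)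
    (F : Fin N → EuclideanSpace ℝ (Fin d) → ℝ)
    (hFlip : ∀ k (w w' : EuclideanSpace ℝ (Fin d)), |F k w - F k w'| ≤ B * ‖w - w'‖)
    (Fbar : EuclideanSpace ℝ (Fin d) → ℝ → ℝ)
    (hFbar : Fbar = fun u η => η + (1 / θ) * ∑ k, α k * gsm ν (F k u - η)) :
    (∀ u : EuclideanSpace ℝ (Fin d), ∃ η : ℝ,
        IsLeast (Set.range (Fbar u)) (Fbar u η)) ∧
    (∀ u u' : EuclideanSpace ℝ (Fin d),
        |(⨅ η : ℝ, Fbar u η) - (⨅ η : ℝ, Fbar u' η)| ≤ (B / θ) * ‖u - u'‖) := by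
  have hθ' : (0:ℝ) < 1 / θ := by positivity
  -- continuity in η
  have hcont : ∀ u, Continuous (Fbar u) := by
    intro u; rw [hFbar]
    exact continuous_id.add (continuous_const.mul (continuous_finset_sum _ fun k _ =>
      continuous_const.mul ((gsm_cont hν).comp (continuous_const.sub continuous_id))))
  -- lower bound 1 : η ≤ Fbar u η
  have hlow1 : ∀ u η, η ≤ Fbar u η := by
    intro u η; rw [hFbar]
    have : (0:ℝ) ≤ ∑ k, α k * gsm ν (F k u - η) :=
      Finset.sum_nonneg fun k _ => mul_nonneg (hα k).le (gsm_nonneg hν _)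
    nlinarith
  -- lower bound 2 : linear lower bound with negative slope
  have hlow2 : ∀ u η, (1/θ) * (∑ k, α k * F k u) + (1 - 1/θ) * η ≤ Fbar u η := by
    intro u η; rw [hFbar]
    have h1 : ∑ k, α k * (F k u - η) ≤ ∑ k, α k * gsm ν (F k u - η) :=
      Finset.sum_le_sum fun k _ =>
        mul_le_mul_of_nonneg_left (gsm_ge_self hν _) (hα k).le
    have h2 : ∑ k, α k * (F k u - η) = (∑ k, α k * F k u) - η := by
      simp [mul_sub, Finset.sum_sub_distrib, ← Finset.sum_mul, hαsum]
    have h3 := mul_le_mul_of_nonneg_left h1 hθ'.le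
    simp only [h2] at h3
    nlinarith
  -- attainment
  have hmin : ∀ u, ∃ η₀, ∀ η, Fbar u η₀ ≤ Fbar u η := by
    intro u
    have hT : Filter.Tendsto (Fbar u) (Filter.cocompact ℝ) Filter.atTop := by
      rw [cocompact_eq_atBot_atTop, Filter.tendsto_sup]
      constructor
      · -- atBot
        have hna : (0:ℝ) < 1 / θ - 1 := by
          have : 1 < 1 / θ := (one_lt_one_div hθ0 hθ1)
          linarith
        have t1 : Filter.Tendsto (fun η : ℝ => -η) Filter.atBot Filter.atTop :=
          Filter.tendsto_neg_atBot_atTop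
        have t2 : Filter.Tendsto (fun η : ℝ => (1 / θ - 1) * -η) Filter.atBot Filter.atTop :=
          t1.const_mul_atTop hna
        have t3 := Filter.tendsto_atTop_add_const_left Filter.atBot
          ((1/θ) * (∑ k, α k * F k u)) t2
        refine Filter.tendsto_atTop_mono (fun η => ?_) t3
        have := hlow2 u η
        nlinarith [hlow2 u η]
      · exact Filter.tendsto_atTop_mono (hlow1 u) Filter.tendsto_id
    obtain ⟨η₀, h₀⟩ := (hcont u).exists_forall_le hT
    exact ⟨η₀, h₀⟩
  -- Lipschitz in u for fixed η
  have hkey : ∀ (u u' : EuclideanSpace ℝ (Fin d)) (η : ℝ),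
      |Fbar u η - Fbar u' η| ≤ (B / θ) * ‖u - u'‖ := by
    intro u u' η
    have hdiff : Fbar u η - Fbar u' η
        = (1/θ) * ∑ k, α k * (gsm ν (F k u - η) - gsm ν (F k u' - η)) := by
      rw [hFbar]
      simp only [mul_sub, Finset.sum_sub_distrib, Finset.mul_sum]
      ring
    rw [hdiff, abs_mul, abs_of_pos hθ']
    have hsum : |∑ k, α k * (gsm ν (F k u - η) - gsm ν (F k u' - η))| ≤ B * ‖u - u'‖ := by
      refine (Finset.abs_sum_le_sum_abs _ _).trans ?_
      have : ∀ k ∈ Finset.univ, |α k * (gsm ν (F k u - η) - gsm ν (F k u' - η))|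
          ≤ α k * (B * ‖u - u'‖) := by
        intro k _
        rw [abs_mul, abs_of_pos (hα k)]
        refine mul_le_mul_of_nonneg_left ?_ (hα k).le
        refine (gsm_abs_sub hν _ _).trans ?_
        have : F k u - η - (F k u' - η) = F k u - F k u' := by ring
        rw [this]; exact hFlip k u u'
      refine (Finset.sum_le_sum this).trans ?_
      rw [← Finset.sum_mul, hαsum, one_mul]
    calc 1 / θ * |∑ k, α k * (gsm ν (F k u - η) - gsm ν (F k u' - η))|
        ≤ 1 / θ * (B * ‖u - u'‖) := mul_le_mul_of_nonneg_left hsum hθ'.le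
      _ = (B / θ) * ‖u - u'‖ := by ring
  constructor
  · intro u
    obtain ⟨η₀, h₀⟩ := hmin u
    exact ⟨η₀, ⟨η₀, rfl⟩, by rintro x ⟨η, rfl⟩; exact h₀ η⟩
  · intro u u'
    obtain ⟨η₀, h₀⟩ := hmin u
    obtain ⟨η₁, h₁⟩ := hmin u'
    have e0 : (⨅ η : ℝ, Fbar u η) = Fbar u η₀ := by
      rw [← sInf_range]
      exact IsLeast.csInf_eq ⟨⟨η₀, rfl⟩, by rintro x ⟨η, rfl⟩; exact h₀ η⟩
    have e1 : (⨅ η : ℝ, Fbar u' η) = Fbar u' η₁ := by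
      rw [← sInf_range]
      exact IsLeast.csInf_eq ⟨⟨η₁, rfl⟩, by rintro x ⟨η, rfl⟩; exact h₁ η⟩
    rw [e0, e1, abs_sub_le_iff]
    have k1 := abs_le.1 (hkey u u' η₁)
    have k2 := abs_le.1 (hkey u u' η₀)
    constructor
    · linarith [h₀ η₁, k1.2]
    · linarith [h₁ η₀, k2.1]
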